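/- For every real number α > 1, lim_{m→∞} σ_α(L_m)/(L_m)^α = ζ(α), where L_m = lcm(1,2,…,m). -/

import Mathlib

/-
Pairing each divisor d of n with n / d gives σ_α(n) / n^α = ∑_{d ∣ n} d^(-α). Every k ≤ m divides
L_m, so the divisor sets of L_m exhaust the positive integers, and these finite partial sums of the
convergent series ∑_{d ≥ 1} d^(-α) tend to ζ(α).
-/

open Filter Topology

noncomputable def sigmaR (α : ℝ) (m : ℕ) : ℝ := ∑ d ∈ m.divisors, (d : ℝ) ^ α

noncomputable def zetaR (α : ℝ) : ℝ := ∑' k : ℕ, ((k : ℝ) + 1) ^ (-α)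

/-- L_m = lcm(1,2,…,m) -/
def Lm (m : ℕ) : ℕ := (Finset.Icc 1 m).lcm id

lemma sigmaR_div_rpow_eq_sum_divisors (α : ℝ) {n : ℕ} (hn : n ≠ 0) :
    sigmaR α n / (n : ℝ) ^ α = ∑ d ∈ n.divisors, (d : ℝ) ^ (-α) := by
  rw [sigmaR, ← Nat.sum_div_divisors n (fun d => (d : ℝ) ^ α), Finset.sum_div]
  refine Finset.sum_congr rfl fun d hd => ?_
  have hd0 : (0 : ℝ) < d := by exact_mod_cast Nat.pos_of_mem_divisors hd
  rw [Nat.cast_div (Nat.dvd_of_mem_divisors hd) hd0.ne', Real.div_rpow (by positivity) hd0.le,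
    Real.rpow_neg hd0.le]
  field_simp

lemma hasSum_rpow_neg_zetaR {α : ℝ} (hα : 1 < α) :
    HasSum (fun d : ℕ => (d : ℝ) ^ (-α)) (zetaR α) := by
  have hsummable : Summable fun d : ℕ => (d : ℝ) ^ (-α) :=
    Real.summable_nat_rpow.2 (by linarith)
  rw [← hasSum_nat_add_iff' 1]
  simpa [Real.zero_rpow (by linarith : -α ≠ 0), zetaR] using
    ((summable_nat_add_iff 1).2 hsummable).hasSum

lemma Lm_ne_zero (m : ℕ) : Lm m ≠ 0 := by
  simp [Lm, Finset.lcm_eq_zero_iff]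

lemma dvd_Lm {d m : ℕ} (hd : 1 ≤ d) (hdm : d ≤ m) : d ∣ Lm m :=
  Finset.dvd_lcm (Finset.mem_Icc.2 ⟨hd, hdm⟩)

-- `0` is added so that the finsets exhaust all of `ℕ`; its term `0 ^ (-α)` is `0`.
lemma tendsto_insert_zero_divisors_Lm :
    Tendsto (fun m => insert 0 (Lm m).divisors) atTop atTop := by
  refine tendsto_atTop_atTop.2 fun s => ⟨s.sup id, fun m hm d hd => ?_⟩
  rcases Nat.eq_zero_or_pos d with rfl | hd0
  · exact Finset.mem_insert_self _ _
  · exact Finset.mem_insert_of_mem <| Nat.mem_divisors.2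
      ⟨dvd_Lm hd0 ((Finset.le_sup (f := id) hd).trans hm), Lm_ne_zero m⟩

theorem stmt_2 (α : ℝ) (hα : 1 < α) :
    Tendsto (fun m : ℕ => sigmaR α (Lm m) / ((Lm m : ℝ)) ^ α)
      atTop (𝓝 (zetaR α)) := by
  have hzero : ((0 : ℕ) : ℝ) ^ (-α) = 0 := by
    simpa using Real.zero_rpow (by linarith : -α ≠ 0)
  convert (hasSum_rpow_neg_zetaR hα).comp tendsto_insert_zero_divisors_Lm using 1
  ext m
  rw [Function.comp_apply, Finset.sum_insert_zero (f := fun d : ℕ => (d : ℝ) ^ (-α)) hzero]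
  exact sigmaR_div_rpow_eq_sum_divisors α (Lm_ne_zero m)
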